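/- arXiv:2307.00655 — 4 statements merged into one kernel-verified Lean document; each statement's English description precedes it below -/
import Mathlib

section
/- Let n ≥ 1, σ = {0} × ℝⁿ ⊆ ℝ^{2n}, and let L be a Lagrangian subspace of (ℝ^{2n}, ω) with dim(L ∩ σ) = k. Then there exists a subset K ⊆ {1,…,n} with |K| = k such that L ∩ σ_K = {0}, where σ_K = J_K σ. -/
open Matrix
open Module

lemma exists_coord_finset {n k : ℕ} (W : Submodule ℝ (Fin n → ℝ))
    (hW : Module.finrank ℝ W = k) :
    ∃ K : Finset (Fin n), K.card = k ∧ ∀ p ∈ W, (∀ i ∈ K, p i = 0) → p = 0 := by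
  classical
  set f : Fin n → Module.Dual ℝ W := fun i => (LinearMap.proj i).comp W.subtype with hf
  have hspan : Submodule.span ℝ (Set.range f) = ⊤ := by
    rw [Submodule.eq_top_iff']
    intro φ
    obtain ⟨ψ, hψ⟩ := Subspace.dualRestrict_surjective (W := W) φ
    have hφ : φ = ∑ i, ψ (fun j => if i = j then 1 else 0) • f i := by
      ext w
      rw [← hψ]
      simp only [Submodule.dualRestrict_apply, LinearMap.sum_apply, LinearMap.smul_apply,
        hf, LinearMap.comp_apply, LinearMap.proj_apply, Submodule.subtype_apply, smul_eq_mul]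
      rw [ψ.pi_apply_eq_sum_univ (w : Fin n → ℝ)]
      simp [mul_comm]
    rw [hφ]
    exact Submodule.sum_mem _ fun i _ => Submodule.smul_mem _ _ (Submodule.subset_span ⟨i, rfl⟩)
  obtain ⟨b, hbsub, hbspan, hbind⟩ := exists_linearIndependent ℝ (Set.range f)
  rw [hspan] at hbspan
  have hbasis : Basis b ℝ (Module.Dual ℝ W) :=
    Basis.mk hbind (by rw [Subtype.range_coe]; rw [hbspan])
  haveI : Fintype b := FiniteDimensional.fintypeBasisIndex hbasis
  have hcard : Fintype.card b = k := by
    rw [← Module.finrank_eq_card_basis hbasis, Subspace.dual_finrank_eq, hW]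
  choose g hg using fun x : b => hbsub x.2
  have ginj : Function.Injective g := fun x y hxy =>
    Subtype.ext (by rw [← hg x, ← hg y, hxy])
  refine ⟨Finset.univ.image g, ?_, ?_⟩
  · rw [Finset.card_image_of_injective _ ginj, Finset.card_univ, hcard]
  · intro p hp hzero
    have hP : (⟨p, hp⟩ : W) = 0 := by
      rw [← Module.forall_dual_apply_eq_zero_iff ℝ]
      intro φ
      have hφ : φ ∈ Submodule.span ℝ b := hbspan ▸ Submodule.mem_top
      induction hφ using Submodule.span_induction with
      | mem x hx =>
          have h := DFunLike.congr_fun (hg ⟨x, hx⟩) (⟨p, hp⟩ : W)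
          rw [show (((⟨x, hx⟩ : b) : Module.Dual ℝ W)) = x from rfl] at h
          rw [← h]
          exact hzero _ (Finset.mem_image_of_mem g (Finset.mem_univ _))
      | zero => simp
      | add x y _ _ hx hy => simp [hx, hy]
      | smul c x _ hx => simp [hx]
    simpa using congrArg Subtype.val hP


/-- The canonical symplectic form on `ℝ²ⁿ = ℝⁿ × ℝⁿ`:
`ω((q,p),(q',p')) = ⟨p,q'⟩ − ⟨q,p'⟩`. -/
def symplForm (n : ℕ) (v w : (Fin n → ℝ) × (Fin n → ℝ)) : ℝ :=
  v.2 ⬝ᵥ w.1 - v.1 ⬝ᵥ w.2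

/-- A Lagrangian subspace of `ℝ²ⁿ`: an `n`-dimensional subspace on which `ω` vanishes. -/
def IsLagrangian (n : ℕ) (L : Submodule ℝ ((Fin n → ℝ) × (Fin n → ℝ))) : Prop :=
  Module.finrank ℝ L = n ∧ ∀ v ∈ L, ∀ w ∈ L, symplForm n v w = 0

/-- The Lagrangian subspace `σ = {0} × ℝⁿ`. -/
def sigmaVert (n : ℕ) : Submodule ℝ ((Fin n → ℝ) × (Fin n → ℝ)) :=
  Submodule.prod ⊥ ⊤

/-- The linear map `J_K : ℝ²ⁿ → ℝ²ⁿ`, multiplication by `i` on the `K`-coordinates under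
`ℝ²ⁿ ≅ ℂⁿ`: it sends `(qⁱ,pⁱ) ↦ (−pⁱ,qⁱ)` for `i ∈ K` and fixes the other coordinates. -/
def JK (n : ℕ) (K : Finset (Fin n)) :
    ((Fin n → ℝ) × (Fin n → ℝ)) →ₗ[ℝ] ((Fin n → ℝ) × (Fin n → ℝ)) where
  toFun v := (fun i => if i ∈ K then -v.2 i else v.1 i,
              fun i => if i ∈ K then v.1 i else v.2 i)
  map_add' x y := by
    refine Prod.ext (funext fun i => ?_) (funext fun i => ?_) <;>
      by_cases h : i ∈ K <;> simp [h] <;> ring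
  map_smul' c x := by
    refine Prod.ext (funext fun i => ?_) (funext fun i => ?_) <;>
      by_cases h : i ∈ K <;> simp [h]

/-- If `L` is a Lagrangian subspace with `dim (L ∩ σ) = k`, then there is a set of indices
`K` of cardinality `k` such that `L` is transversal to `σ_K = J_K σ`. -/
theorem exists_transversal_sigmaK (n : ℕ) (hn : 1 ≤ n) (k : ℕ)
    (L : Submodule ℝ ((Fin n → ℝ) × (Fin n → ℝ))) (hL : IsLagrangian n L)
    (hk : Module.finrank ℝ ↥(L ⊓ sigmaVert n) = k) :
    ∃ K : Finset (Fin n), K.card = k ∧ L ⊓ (sigmaVert n).map (JK n K) = ⊥ := by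
  classical
  obtain ⟨hdim, hiso⟩ := hL
  set W : Submodule ℝ (Fin n → ℝ) :=
    Submodule.map (LinearMap.snd ℝ (Fin n → ℝ) (Fin n → ℝ)) (L ⊓ sigmaVert n) with hWdef
  have hWrank : Module.finrank ℝ W = k := by
    set g := (LinearMap.snd ℝ (Fin n → ℝ) (Fin n → ℝ)).domRestrict (L ⊓ sigmaVert n) with hgdef
    have hker : LinearMap.ker g = ⊥ := by
      rw [LinearMap.ker_eq_bot']
      rintro ⟨⟨q, p⟩, hm⟩ h0
      have hq : q = 0 := hm.2.1
      have hp : p = 0 := h0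
      ext : 2
      · exact hq
      · exact hp
    have h1 := LinearMap.finrank_range_add_finrank_ker g
    rw [hker, finrank_bot, add_zero, LinearMap.range_domRestrict, hk] at h1
    rw [hWdef, h1]
  obtain ⟨K, hKcard, hKinj⟩ := exists_coord_finset W hWrank
  -- the restriction-to-K map on W is surjective
  have hsurj : ∀ q : Fin n → ℝ, ∃ w ∈ W, ∀ i ∈ K, w i = q i := by
    set ρ : W →ₗ[ℝ] ({ i // i ∈ K } → ℝ) :=
      LinearMap.pi (fun i : { i // i ∈ K } => (LinearMap.proj (i : Fin n)).comp W.subtype) with hρ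
    have hinj : Function.Injective ρ := by
      rw [← LinearMap.ker_eq_bot, Submodule.eq_bot_iff]
      rintro ⟨w, hw⟩ h0
      have : w = 0 := hKinj w hw fun i hi => congrFun h0 ⟨i, hi⟩
      exact Subtype.ext this
    have hsur : Function.Surjective ρ := by
      refine (LinearMap.injective_iff_surjective_of_finrank_eq_finrank ?_).mp hinj
      rw [hWrank, Module.finrank_fintype_fun_eq_card, Fintype.card_coe, hKcard]
    intro q
    obtain ⟨w, hweq⟩ := hsur (fun i : { i // i ∈ K } => q i)
    exact ⟨w, w.2, fun i hi => congrFun hweq ⟨i, hi⟩⟩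
  refine ⟨K, hKcard, ?_⟩
  rw [Submodule.eq_bot_iff]
  rintro v ⟨hvL, hvK⟩
  obtain ⟨u, hu, huv⟩ := hvK
  have hu1 : u.1 = 0 := hu.1
  have hv1off : ∀ i ∉ K, v.1 i = 0 := by
    intro i hi
    rw [← huv]
    show (if i ∈ K then -u.2 i else u.1 i) = 0
    rw [if_neg hi, hu1]
    rfl
  have hv2on : ∀ i ∈ K, v.2 i = 0 := by
    intro i hi
    rw [← huv]
    show (if i ∈ K then u.1 i else u.2 i) = 0
    rw [if_pos hi, hu1]
    rfl
  have horth : ∀ u' ∈ W, v.1 ⬝ᵥ u' = 0 := by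
    rintro u' ⟨x, hx, rfl⟩
    have h0 := hiso v hvL x hx.1
    have hx1 : x.1 = 0 := hx.2.1
    unfold symplForm at h0
    rw [hx1] at h0
    simp only [dotProduct_zero, zero_sub, neg_eq_zero] at h0
    exact h0
  -- show v.1 = 0
  obtain ⟨w, hwW, hwK⟩ := hsurj v.1
  have hsum : v.1 ⬝ᵥ w = ∑ i ∈ K, v.1 i * v.1 i := by
    rw [dotProduct]
    rw [← Finset.sum_subset (Finset.subset_univ K)
      (fun i _ hi => by rw [hv1off i hi, zero_mul])]
    exact Finset.sum_congr rfl fun i hi => by rw [hwK i hi]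
  have hsum0 : ∑ i ∈ K, v.1 i * v.1 i = 0 := by rw [← hsum, horth w hwW]
  have hv1 : v.1 = 0 := by
    funext i
    by_cases hi : i ∈ K
    · exact mul_self_eq_zero.mp
        ((Finset.sum_eq_zero_iff_of_nonneg fun j _ => mul_self_nonneg _).mp hsum0 i hi)
    · exact hv1off i hi
  have hv2W : v.2 ∈ W := ⟨v, ⟨hvL, hv1, trivial⟩, rfl⟩
  have hv2 : v.2 = 0 := hKinj v.2 hv2W hv2on
  exact Prod.ext hv1 hv2
end

section
/- Let n ≥ 1, let 0 ≤ k ≤ n, let K = {1,…,k}, let σ = {0} × ℝⁿ, and let S be a symmetric n×n real matrix with top-left k×k block S₁. Then the Lagrangian subspace L = J_K λ_S satisfies dim(L ∩ σ) = dim ker S₁; in particular, dim(L ∩ σ) = k if and only if S₁ = 0, i.e. if and only if the entries S_{μν} vanish for all μ, ν ∈ K. -/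
open Matrix

/-- The graph `λ_S = {(q, Sq) : q ∈ ℝⁿ}` of an `n × n` real matrix `S`. -/
def matrixGraph (n : ℕ) (S : Matrix (Fin n) (Fin n) ℝ) :
    Submodule ℝ ((Fin n → ℝ) × (Fin n → ℝ)) :=
  LinearMap.graph S.mulVecLin


section Aux

variable {n k : ℕ}

/-- Extension by zero of a vector on the first `k` coordinates. -/
def extMap (hk : k ≤ n) : (Fin k → ℝ) →ₗ[ℝ] (Fin n → ℝ) where
  toFun x i := if h : (i : ℕ) < k then x ⟨i, h⟩ else 0
  map_add' x y := by funext i; by_cases h : (i : ℕ) < k <;> simp [h]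
  map_smul' c x := by funext i; by_cases h : (i : ℕ) < k <;> simp [h]

lemma extMap_apply (hk : k ≤ n) (x : Fin k → ℝ) (i : Fin n) :
    extMap hk x i = if h : (i : ℕ) < k then x ⟨i, h⟩ else 0 := rfl

lemma extMap_castLE (hk : k ≤ n) (x : Fin k → ℝ) (μ : Fin k) :
    extMap hk x (Fin.castLE hk μ) = x μ := by
  simp [extMap_apply, μ.isLt]

lemma mulVec_extMap (hk : k ≤ n) (S : Matrix (Fin n) (Fin n) ℝ) (x : Fin k → ℝ) (μ : Fin k) :
    S.mulVec (extMap hk x) (Fin.castLE hk μ) =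
      (S.submatrix (Fin.castLE hk) (Fin.castLE hk)).mulVec x μ := by
  classical
  simp only [Matrix.mulVec, dotProduct, Matrix.submatrix_apply]
  refine ((Finset.sum_subset (Finset.subset_univ (Finset.univ.map (Fin.castLEEmb hk)))
      (f := fun j => S (Fin.castLE hk μ) j * extMap hk x j) ?_).symm).trans ?_
  · intro j _ hj
    have hjk : ¬ (j : ℕ) < k := by
      intro h
      exact hj (Finset.mem_map.mpr ⟨⟨j, h⟩, Finset.mem_univ _, by ext; simp⟩)
    simp [extMap_apply, hjk]
  · rw [Finset.sum_map]
    refine Finset.sum_congr rfl fun ν _ => ?_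
    simp [Fin.castLEEmb, extMap_castLE]

end Aux

/-- For `K = {1,…,k}` and a symmetric matrix `S` with top-left `k × k` block `S₁`, the
Lagrangian `L = J_K λ_S` satisfies `dim (L ∩ σ) = dim ker S₁`; in particular
`dim (L ∩ σ) = k` iff `S₁ = 0`, i.e. iff `S_{μν} = 0` for all `μ, ν ∈ K`. -/


theorem dim_inter_sigma_eq_dim_ker_block (n k : ℕ) (hn : 1 ≤ n) (hk : k ≤ n)
    (S : Matrix (Fin n) (Fin n) ℝ) (hS : S.IsSymm) :
    Module.finrank ℝ
        ↥(((matrixGraph n S).map (JK n (Finset.univ.filter fun i : Fin n => (i : ℕ) < k)))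
          ⊓ sigmaVert n) =
      Module.finrank ℝ
        ↥(LinearMap.ker (S.submatrix (Fin.castLE hk) (Fin.castLE hk)).mulVecLin) ∧
    (Module.finrank ℝ
        ↥(((matrixGraph n S).map (JK n (Finset.univ.filter fun i : Fin n => (i : ℕ) < k)))
          ⊓ sigmaVert n) = k ↔
      S.submatrix (Fin.castLE hk) (Fin.castLE hk) = 0) ∧
    (S.submatrix (Fin.castLE hk) (Fin.castLE hk) = 0 ↔
      ∀ μ ν : Fin n, (μ : ℕ) < k → (ν : ℕ) < k → S μ ν = 0) := by

  classical
  set K : Finset (Fin n) := Finset.univ.filter fun i : Fin n => (i : ℕ) < k with hKdef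
  have hKmem : ∀ i : Fin n, i ∈ K ↔ (i : ℕ) < k := by
    intro i; simp [hKdef]
  set S₁ := S.submatrix (Fin.castLE hk) (Fin.castLE hk) with hS₁def
  set φ : (Fin k → ℝ) →ₗ[ℝ] ((Fin n → ℝ) × (Fin n → ℝ)) :=
    (JK n K) ∘ₗ (LinearMap.prod LinearMap.id S.mulVecLin) ∘ₗ extMap hk with hφdef
  have hφ : ∀ x : Fin k → ℝ, φ x = JK n K (extMap hk x, S.mulVec (extMap hk x)) := by
    intro x; rfl
  -- the image of the kernel of S₁ under φ is L ⊓ σ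
  have hmap : Submodule.map φ (LinearMap.ker S₁.mulVecLin) =
      ((matrixGraph n S).map (JK n K)) ⊓ sigmaVert n := by
    apply le_antisymm
    · rintro v ⟨x, hx, rfl⟩
      have hker : S₁.mulVec x = 0 := hx
      constructor
      · exact ⟨(extMap hk x, S.mulVec (extMap hk x)), by
          simp [matrixGraph, LinearMap.mem_graph_iff], (hφ x).symm⟩
      · refine ⟨?_, trivial⟩
        rw [hφ x]
        show (fun i => if i ∈ K then -(S.mulVec (extMap hk x)) i else extMap hk x i) = 0
        funext i
        by_cases h : (i : ℕ) < k
        · have : i = Fin.castLE hk ⟨(i : ℕ), h⟩ := by ext; rfl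
          simp only [hKmem i, h, if_true]
          rw [this, mulVec_extMap hk S x ⟨(i : ℕ), h⟩, hker]
          simp
        · simp [hKmem i, h, extMap_apply]
    · rintro v ⟨⟨⟨q, p⟩, hg, rfl⟩, hσ⟩
      have hp : p = S.mulVec q := by
        simpa [matrixGraph, LinearMap.mem_graph_iff] using hg
      have h1 : (JK n K (q, p)).1 = 0 := hσ.1
      have h1' : ∀ i : Fin n, (if i ∈ K then -p i else q i) = 0 := fun i =>
        congrFun h1 i
      refine ⟨fun μ => q (Fin.castLE hk μ), ?_, ?_⟩
      · -- x ∈ ker S₁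
        have hext : extMap hk (fun μ => q (Fin.castLE hk μ)) = q := by
          funext i
          by_cases h : (i : ℕ) < k
          · have : Fin.castLE hk ⟨(i : ℕ), h⟩ = i := by ext; rfl
            simp [extMap_apply, h, this]
          · have := h1' i
            simp only [hKmem i, h, if_false] at this
            simp [extMap_apply, h, this]
        show S₁.mulVec _ = 0
        funext μ
        rw [← mulVec_extMap hk S _ μ, hext, ← hp]
        have := h1' (Fin.castLE hk μ)
        have hμ : ((Fin.castLE hk μ : Fin n) : ℕ) < k := μ.isLt
        simp only [hKmem, hμ, if_true, neg_eq_zero] at this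
        simpa using this
      · rw [hφ]
        have hext : extMap hk (fun μ => q (Fin.castLE hk μ)) = q := by
          funext i
          by_cases h : (i : ℕ) < k
          · have : Fin.castLE hk ⟨(i : ℕ), h⟩ = i := by ext; rfl
            simp [extMap_apply, h, this]
          · have := h1' i
            simp only [hKmem i, h, if_false] at this
            simp [extMap_apply, h, this]
        rw [hext, ← hp]
  have hinj : Function.Injective φ := by
    rw [injective_iff_map_eq_zero]
    intro x hx
    funext μ
    have h2 : (φ x).2 (Fin.castLE hk μ) = 0 := by rw [hx]; rfl
    rw [hφ] at h2
    have hμ : ((Fin.castLE hk μ : Fin n) : ℕ) < k := μ.isLt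
    show x μ = 0
    rw [← extMap_castLE hk x μ]
    simpa [JK, hKmem, hμ] using h2
  have hrank : Module.finrank ℝ
      ↥(((matrixGraph n S).map (JK n K)) ⊓ sigmaVert n) =
      Module.finrank ℝ ↥(LinearMap.ker S₁.mulVecLin) := by
    rw [← hmap]
    exact ((Submodule.equivMapOfInjective φ hinj
      (LinearMap.ker S₁.mulVecLin)).finrank_eq).symm
  refine ⟨hrank, ?_, ?_⟩
  · rw [hrank]
    constructor
    · intro h
      have hk' : Module.finrank ℝ (Fin k → ℝ) = k := by simp
      have htop : LinearMap.ker S₁.mulVecLin = ⊤ :=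
        Submodule.eq_top_of_finrank_eq (by rw [h, hk'])
      have hzero : S₁.mulVecLin = 0 := LinearMap.ker_eq_top.mp htop
      ext μ ν
      have := congrFun (LinearMap.congr_fun hzero (Pi.single ν 1)) μ
      simpa [Matrix.mulVec_single] using this
    · intro h
      rw [h, Matrix.mulVecLin_zero, LinearMap.ker_zero, finrank_top]
      simp
  · constructor
    · intro h μ ν hμ hν
      have := congrFun (congrFun h ⟨(μ : ℕ), hμ⟩) ⟨(ν : ℕ), hν⟩
      have hμ' : Fin.castLE hk ⟨(μ : ℕ), hμ⟩ = μ := by ext; rfl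
      have hν' : Fin.castLE hk ⟨(ν : ℕ), hν⟩ = ν := by ext; rfl
      simpa [hS₁def, Matrix.submatrix_apply, hμ', hν'] using this
    · intro h
      ext μ ν
      simp only [hS₁def, Matrix.submatrix_apply, Matrix.zero_apply]
      exact h _ _ μ.isLt ν.isLt
end

section
/- Let n ≥ 1, let S₀ be a symmetric n×n real matrix, and let t ∈ ℝ be such that cos t · I − sin t · S₀ is invertible. Then, under the identification ℝ^{2n} ≅ ℂⁿ, multiplication by e^{it} maps the Lagrangian subspace λ_{S₀} onto λ_{S(t)}, where S(t) = (sin t · I + cos t · S₀)(cos t · I − sin t · S₀)^{-1}; moreover S(t) is symmetric and the derivative of t ↦ S(t) at t = 0 is I + S₀². -/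
/-!
Write `e^{it}(q + iSq) = C q + i B q` with `C = cos t - sin t S` and `B = sin t + cos t S`.
The image of `λ_S` is then `{Cq + iBq}`, which is the graph of `B C⁻¹` once `C` is invertible
(substitute `p = Cq`). Being polynomials in `S`, `B` and `C` are symmetric and commute, so
`B C⁻¹` is symmetric. Finally `C' = -B` and `B' = C`, so `S(t) = B C⁻¹` satisfies the Riccati
equation `S' = C C⁻¹ + B C⁻¹ B C⁻¹ = 1 + S²`, which at `t = 0` gives `1 + S₀²`.
-/

open Matrix

/-- The Lagrangian subspace `λ_S = {q + iSq : q ∈ ℝⁿ} ⊆ ℂⁿ`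
(under `ℝ²ⁿ ≅ ℂⁿ`, `(q,p) ↦ q + ip`). -/
noncomputable def graphC (n : ℕ) (S : Matrix (Fin n) (Fin n) ℝ) :
    Submodule ℝ (Fin n → ℂ) :=
  Submodule.span ℝ
    {z | ∃ q : Fin n → ℝ, z = fun j => (q j : ℂ) + ((S *ᵥ q) j : ℂ) * Complex.I}

/-- Multiplication by `e^{it}` as an `ℝ`-linear map of `ℂⁿ ≅ ℝ²ⁿ`. -/
noncomputable def expSmul (n : ℕ) (t : ℝ) : (Fin n → ℂ) →ₗ[ℝ] (Fin n → ℂ) :=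
  (LinearMap.lsmul ℂ (Fin n → ℂ) (Complex.exp (t * Complex.I))).restrictScalars ℝ

theorem Commute.ringInverse_right {M₀ : Type*} [MonoidWithZero M₀] {a b : M₀}
    (h : Commute a b) : Commute a (Ring.inverse b) := by
  by_cases hb : IsUnit b
  · obtain ⟨u, rfl⟩ := hb
    rw [Ring.inverse_unit]
    exact h.units_inv_right
  · rw [Ring.inverse_non_unit b hb]
    exact Commute.zero_right a

namespace Matrix

variable {ι α : Type*} [Fintype ι] [DecidableEq ι] [CommRing α]

theorem IsSymm.mul_nonsing_inv {A B : Matrix ι ι α} (hA : A.IsSymm) (hB : B.IsSymm)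
    (h : Commute A B) : (A * B⁻¹).IsSymm := by
  rw [IsSymm, transpose_mul, transpose_nonsing_inv, hA.eq, hB.eq, nonsing_inv_eq_ringInverse]
  exact h.ringInverse_right.eq.symm

end Matrix

section Rotation

variable {ι : Type*} [Fintype ι] [DecidableEq ι]

-- `e^{it} (q + i S q) = rotRe S t q + i rotIm S t q`
noncomputable def rotRe (S : Matrix ι ι ℝ) (t : ℝ) : Matrix ι ι ℝ :=
  Real.cos t • 1 - Real.sin t • S

noncomputable def rotIm (S : Matrix ι ι ℝ) (t : ℝ) : Matrix ι ι ℝ :=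
  Real.sin t • 1 + Real.cos t • S

variable (S : Matrix ι ι ℝ) (t : ℝ)

theorem commute_rotIm_rotRe : Commute (rotIm S t) (rotRe S t) := by
  simp only [rotIm, rotRe, Commute, SemiconjBy, mul_add, add_mul, mul_sub, sub_mul,
    smul_mul_smul_comm, one_mul, mul_one]
  module

omit [Fintype ι] in
variable {S} in
theorem isSymm_rotRe (hS : S.IsSymm) : (rotRe S t).IsSymm := by
  simp [rotRe, IsSymm, transpose_smul, hS.eq]

omit [Fintype ι] in
variable {S} in
theorem isSymm_rotIm (hS : S.IsSymm) : (rotIm S t).IsSymm := by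
  simp [rotIm, IsSymm, transpose_smul, hS.eq]

theorem rotRe_mulVec (q : ι → ℝ) :
    rotRe S t *ᵥ q = Real.cos t • q - Real.sin t • (S *ᵥ q) := by
  simp [rotRe, sub_mulVec, smul_mulVec]

theorem rotIm_mulVec (q : ι → ℝ) :
    rotIm S t *ᵥ q = Real.sin t • q + Real.cos t • (S *ᵥ q) := by
  simp [rotIm, add_mulVec, smul_mulVec]

end Rotation

def ofReIm {n : ℕ} (x y : Fin n → ℝ) : Fin n → ℂ :=
  fun j => (x j : ℂ) + (y j : ℂ) * Complex.I

theorem graphC_eq_span_range (n : ℕ) (S : Matrix (Fin n) (Fin n) ℝ) :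
    graphC n S = Submodule.span ℝ (Set.range fun q => ofReIm q (S *ᵥ q)) := by
  simp only [graphC, Set.range, eq_comm]
  rfl

theorem expSmul_ofReIm {n : ℕ} (t : ℝ) (x y : Fin n → ℝ) :
    expSmul n t (ofReIm x y) =
      ofReIm (Real.cos t • x - Real.sin t • y) (Real.sin t • x + Real.cos t • y) := by
  funext j
  simp only [expSmul, ofReIm, LinearMap.restrictScalars_apply, LinearMap.lsmul_apply,
    Pi.smul_apply, smul_eq_mul, Pi.sub_apply, Pi.add_apply, Complex.exp_mul_I]
  push_cast
  rw [← Complex.ofReal_cos, ← Complex.ofReal_sin]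
  linear_combination (Real.sin t * y j : ℂ) * Complex.I_sq

theorem span_range_ofReIm_mulVec {n : ℕ} {C : Matrix (Fin n) (Fin n) ℝ} (hC : IsUnit C)
    (B : Matrix (Fin n) (Fin n) ℝ) :
    Submodule.span ℝ (Set.range fun q => ofReIm (C *ᵥ q) (B *ᵥ q)) = graphC n (B * C⁻¹) := by
  have hdet : IsUnit C.det := (isUnit_iff_isUnit_det C).mp hC
  rw [graphC_eq_span_range, ← (mulVec_surjective_iff_isUnit.mpr hC).range_comp
    (fun q => ofReIm q ((B * C⁻¹) *ᵥ q))]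
  congr 2
  funext q
  simp only [Function.comp_apply, mulVec_mulVec, nonsing_inv_mul_cancel_right _ _ hdet]

theorem map_expSmul_graphC {n : ℕ} {S : Matrix (Fin n) (Fin n) ℝ} {t : ℝ}
    (hC : IsUnit (rotRe S t)) :
    (graphC n S).map (expSmul n t) = graphC n (rotIm S t * (rotRe S t)⁻¹) := by
  rw [graphC_eq_span_range, Submodule.map_span, ← Set.range_comp,
    ← span_range_ofReIm_mulVec hC]
  congr 2
  funext q
  simp only [Function.comp_apply, expSmul_ofReIm, rotRe_mulVec, rotIm_mulVec]

theorem HasDerivAt.ringInverse {𝕜 R : Type*} [NontriviallyNormedField 𝕜] [NormedRing R]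
    [HasSummableGeomSeries R] [NormedAlgebra 𝕜 R] {f : 𝕜 → R} {f' : R} {x : 𝕜}
    (hf : HasDerivAt f f' x) (hx : IsUnit (f x)) :
    HasDerivAt (fun y => Ring.inverse (f y))
      (-(Ring.inverse (f x) * f' * Ring.inverse (f x))) x := by
  obtain ⟨u, hu⟩ := hx
  have hinv := hasFDerivAt_ringInverse (𝕜 := 𝕜) u
  rw [hu] at hinv
  rw [← hu, Ring.inverse_unit]
  exact hinv.comp_hasDerivAt x hf

-- Any norm would do; the operator norm makes matrices a normed algebra.
attribute [local instance] Matrix.linftyOpNormedRing Matrix.linftyOpNormedAlgebra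

section Derivative

variable {ι : Type*} [Fintype ι] [DecidableEq ι] (S : Matrix ι ι ℝ) (t : ℝ)

theorem hasDerivAt_rotRe : HasDerivAt (rotRe S) (-rotIm S t) t := by
  refine (((Real.hasDerivAt_cos t).smul_const (1 : Matrix ι ι ℝ)).sub
    ((Real.hasDerivAt_sin t).smul_const S)).congr_deriv ?_
  rw [rotIm, neg_smul, neg_add, sub_eq_add_neg]

theorem hasDerivAt_rotIm : HasDerivAt (rotIm S) (rotRe S t) t := by
  refine (((Real.hasDerivAt_sin t).smul_const (1 : Matrix ι ι ℝ)).add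
    ((Real.hasDerivAt_cos t).smul_const S)).congr_deriv ?_
  rw [rotRe, neg_smul, sub_eq_add_neg]

variable {S t} in
theorem hasDerivAt_rotIm_mul_inv_rotRe (h : IsUnit (rotRe S t)) :
    HasDerivAt (fun u => rotIm S u * (rotRe S u)⁻¹) (1 + (rotIm S t * (rotRe S t)⁻¹) ^ 2) t := by
  simp only [nonsing_inv_eq_ringInverse]
  refine ((hasDerivAt_rotIm S t).mul ((hasDerivAt_rotRe S t).ringInverse h)).congr_deriv ?_
  rw [Ring.mul_inverse_cancel _ h]
  noncomm_ring

end Derivative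

theorem exp_smul_graph_general (n : ℕ) (S₀ : Matrix (Fin n) (Fin n) ℝ)
    (hS₀ : S₀.IsSymm) (t : ℝ)
    (hinv : IsUnit (Real.cos t • (1 : Matrix (Fin n) (Fin n) ℝ) - Real.sin t • S₀)) :
    ((Real.sin t • (1 : Matrix (Fin n) (Fin n) ℝ) + Real.cos t • S₀) *
        (Real.cos t • (1 : Matrix (Fin n) (Fin n) ℝ) - Real.sin t • S₀)⁻¹).IsSymm ∧
    (graphC n S₀).map (expSmul n t) =
      graphC n ((Real.sin t • (1 : Matrix (Fin n) (Fin n) ℝ) + Real.cos t • S₀) *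
        (Real.cos t • (1 : Matrix (Fin n) (Fin n) ℝ) - Real.sin t • S₀)⁻¹) ∧
    ∀ i j : Fin n,
      HasDerivAt
        (fun u : ℝ =>
          ((Real.sin u • (1 : Matrix (Fin n) (Fin n) ℝ) + Real.cos u • S₀) *
            (Real.cos u • (1 : Matrix (Fin n) (Fin n) ℝ) - Real.sin u • S₀)⁻¹) i j)
        ((1 + S₀ * S₀) i j) 0 := by
  refine ⟨(isSymm_rotIm t hS₀).mul_nonsing_inv (isSymm_rotRe t hS₀) (commute_rotIm_rotRe S₀ t),
    map_expSmul_graphC hinv, fun i j => ?_⟩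
  have hS : HasDerivAt (fun u => rotIm S₀ u * (rotRe S₀ u)⁻¹) (1 + S₀ * S₀) 0 := by
    have hC : rotRe S₀ 0 = 1 := by simp [rotRe]
    have hB : rotIm S₀ 0 = S₀ := by simp [rotIm]
    refine (hasDerivAt_rotIm_mul_inv_rotRe (hC ▸ isUnit_one)).congr_deriv ?_
    rw [hC, hB, inv_one, mul_one, sq]
  exact (entryLinearMap ℝ ℝ i j).toContinuousLinearMap.hasFDerivAt.comp_hasDerivAt 0 hS

/-- If `cos t · I − sin t · S₀` is invertible, then multiplication by `e^{it}` maps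
`λ_{S₀}` onto `λ_{S(t)}` with `S(t) = (sin t · I + cos t · S₀)(cos t · I − sin t · S₀)⁻¹`;
moreover `S(t)` is symmetric, and the derivative of `t ↦ S(t)` at `t = 0` is `I + S₀²`. -/
theorem exp_smul_graph (n : ℕ) (hn : 1 ≤ n) (S₀ : Matrix (Fin n) (Fin n) ℝ)
    (hS₀ : S₀.IsSymm) (t : ℝ)
    (hinv : IsUnit (Real.cos t • (1 : Matrix (Fin n) (Fin n) ℝ) - Real.sin t • S₀)) :
    ((Real.sin t • (1 : Matrix (Fin n) (Fin n) ℝ) + Real.cos t • S₀) *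
        (Real.cos t • (1 : Matrix (Fin n) (Fin n) ℝ) - Real.sin t • S₀)⁻¹).IsSymm ∧
    (graphC n S₀).map (expSmul n t) =
      graphC n ((Real.sin t • (1 : Matrix (Fin n) (Fin n) ℝ) + Real.cos t • S₀) *
        (Real.cos t • (1 : Matrix (Fin n) (Fin n) ℝ) - Real.sin t • S₀)⁻¹) ∧
    ∀ i j : Fin n,
      HasDerivAt
        (fun u : ℝ =>
          ((Real.sin u • (1 : Matrix (Fin n) (Fin n) ℝ) + Real.cos u • S₀) *
            (Real.cos u • (1 : Matrix (Fin n) (Fin n) ℝ) - Real.sin u • S₀)⁻¹) i j)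
        ((1 + S₀ * S₀) i j) 0 :=
  exp_smul_graph_general n S₀ hS₀ t hinv
end

section
/- Let n ≥ 1, let a < b be reals, let R : [a,b] → Sym(n,ℝ) be continuous, and let τ ⊆ ℝ^{2n} be a Lagrangian subspace. Then the set of t ∈ [a,b] for which there exists a nonzero smooth solution X : [a,b] → ℝⁿ of −X'' + R(s)X = 0 with (X(a), X'(a)) ∈ τ and X(t) = 0 is finite. Equivalently, the curve t ↦ λ(t) = Φ(t)τ of Lagrangian subspaces obtained by transporting τ along the flow v' = A(t)v, A(t) = [[0, I],[R(t), 0]], meets the set of Lagrangians intersecting σ = {0} × ℝⁿ nontrivially only finitely many times. -/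
open Set Matrix Filter Topology

section Auxiliary

variable {n : ℕ} {a b : ℝ} {R : ℝ → Matrix (Fin n) (Fin n) ℝ}

/-- The solution predicate: `(f, g)` is a solution of the first-order system on `[a,b]`. -/
def IsSolPair (R : ℝ → Matrix (Fin n) (Fin n) ℝ) (a b : ℝ) (f g : ℝ → (Fin n → ℝ)) : Prop :=
  ∀ t ∈ Icc a b, HasDerivWithinAt f (g t) (Icc a b) t ∧
    HasDerivWithinAt g (R t *ᵥ f t) (Icc a b) t

lemma isSolPair_zero : IsSolPair R a b (fun _ => 0) (fun _ => 0) := by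
  intro t ht
  refine ⟨hasDerivWithinAt_const t _ 0, ?_⟩
  simpa [Matrix.mulVec_zero] using hasDerivWithinAt_const (𝕜 := ℝ) t (Icc a b) (0 : Fin n → ℝ)

lemma isSolPair_add {f g f' g' : ℝ → (Fin n → ℝ)} (h : IsSolPair R a b f g)
    (h' : IsSolPair R a b f' g') :
    IsSolPair R a b (fun t => f t + f' t) (fun t => g t + g' t) := by
  intro t ht
  refine ⟨(h t ht).1.add (h' t ht).1, ?_⟩
  rw [Matrix.mulVec_add]; exact (h t ht).2.add (h' t ht).2

lemma isSolPair_smul (c : ℝ) {f g : ℝ → (Fin n → ℝ)} (h : IsSolPair R a b f g) :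
    IsSolPair R a b (fun t => c • f t) (fun t => c • g t) := by
  intro t ht
  refine ⟨(h t ht).1.const_smul c, ?_⟩
  rw [Matrix.mulVec_smul]; exact (h t ht).2.const_smul c

lemma isSolPair_sum {ι : Type*} [Fintype ι] (c : ι → ℝ) {F G : ι → ℝ → Fin n → ℝ}
    (h : ∀ i, IsSolPair R a b (F i) (G i)) :
    IsSolPair R a b (fun t => ∑ i, c i • F i t) (fun t => ∑ i, c i • G i t) := by
  intro t ht
  constructor
  · exact HasDerivWithinAt.fun_sum fun i _ => ((h i) t ht).1.const_smul (c i)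
  · have := HasDerivWithinAt.fun_sum fun i (_ : i ∈ Finset.univ) => ((h i) t ht).2.const_smul (c i)
    have heq : ∑ i, c i • (R t *ᵥ F i t) = R t *ᵥ ∑ i, c i • F i t := by
      have h2 : ∀ x : Fin n → ℝ, R t *ᵥ x = (R t).mulVecLin x := fun x => rfl
      simp only [h2, ← _root_.map_smul, ← map_sum]
    rwa [heq] at this

/-- A uniform bound for the matrix norm acting on vectors. -/
lemma exists_mulVec_bound (hRcont : ContinuousOn R (Icc a b)) :
    ∃ C : ℝ, 0 ≤ C ∧ ∀ t ∈ Icc a b, ∀ z : Fin n → ℝ, ‖R t *ᵥ z‖ ≤ C * ‖z‖ := by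
  set Φ : Matrix (Fin n) (Fin n) ℝ →ₗ[ℝ] ((Fin n → ℝ) →L[ℝ] (Fin n → ℝ)) :=
    (LinearMap.toContinuousLinearMap.toLinearMap.comp Matrix.toLin'.toLinearMap) with hΦ
  have hΦc : Continuous Φ := Φ.continuous_of_finiteDimensional
  have hcont : ContinuousOn (fun t => ‖Φ (R t)‖) (Icc a b) :=
    (hΦc.comp_continuousOn hRcont).norm
  obtain ⟨C, hC⟩ := isCompact_Icc.exists_bound_of_continuousOn hcont
  have hC0 : 0 ≤ C ∨ Icc a b = ∅ := by
    rcases eq_empty_or_nonempty (Icc a b) with h | ⟨t, ht⟩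
    · exact Or.inr h
    · exact Or.inl (le_trans (norm_nonneg _) (by simpa using hC t ht))
  rcases hC0 with hC0 | hemp
  · refine ⟨C, hC0, fun t ht z => ?_⟩
    have h1 : ‖Φ (R t) z‖ ≤ ‖Φ (R t)‖ * ‖z‖ := (Φ (R t)).le_opNorm z
    have h2 : Φ (R t) z = R t *ᵥ z := by
      simp [hΦ, Matrix.toLin'_apply]
    rw [h2] at h1
    exact h1.trans (mul_le_mul_of_nonneg_right (by simpa using hC t ht) (norm_nonneg _))
  · exact ⟨0, le_refl 0, fun t ht => by rw [hemp] at ht; exact absurd ht (notMem_empty t)⟩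

/-- Uniqueness of solutions of the linear system from data at any point of `[a, b]`. -/
lemma solPair_unique (hab : a ≤ b) (hRcont : ContinuousOn R (Icc a b))
    {f g f' g' : ℝ → (Fin n → ℝ)}
    (hp : IsSolPair R a b f g) (hq : IsSolPair R a b f' g')
    {t₀ : ℝ} (ht₀ : t₀ ∈ Icc a b) (h1 : f t₀ = f' t₀) (h2 : g t₀ = g' t₀) :
    ∀ t ∈ Icc a b, f t = f' t ∧ g t = g' t := by
  obtain ⟨C, hC0, hC⟩ := exists_mulVec_bound hRcont
  set c : ℝ → ℝ := fun t => max a (min t b) with hc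
  have hcmem : ∀ t, c t ∈ Icc a b := fun t =>
    ⟨le_max_left _ _, max_le hab (min_le_right _ _)⟩
  have hceq : ∀ t ∈ Icc a b, c t = t := fun t ht => by
    rw [hc]; simp only; rw [min_eq_left ht.2, max_eq_right ht.1]
  set v : ℝ → ((Fin n → ℝ) × (Fin n → ℝ)) → ((Fin n → ℝ) × (Fin n → ℝ)) :=
    fun t x => (x.2, R (c t) *ᵥ x.1) with hv
  set K : NNReal := ⟨max 1 C, le_trans zero_le_one (le_max_left _ _)⟩ with hK
  have hlip : ∀ t, LipschitzOnWith K (v t) univ := by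
    intro t
    rw [lipschitzOnWith_iff_dist_le_mul]
    intro x _ y _
    have hKc : (K : ℝ) = max 1 C := rfl
    rw [hKc, Prod.dist_eq]
    apply max_le
    · calc dist (v t x).1 (v t y).1 = dist x.2 y.2 := rfl
        _ ≤ dist x y := by rw [Prod.dist_eq]; exact le_max_right _ _
        _ ≤ max 1 C * dist x y := le_mul_of_one_le_left dist_nonneg (le_max_left _ _)
    · have : dist (v t x).2 (v t y).2 = ‖R (c t) *ᵥ (x.1 - y.1)‖ := by
        rw [dist_eq_norm]
        simp only [hv]
        rw [Matrix.mulVec_sub]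
      rw [this]
      calc ‖R (c t) *ᵥ (x.1 - y.1)‖ ≤ C * ‖x.1 - y.1‖ := hC _ (hcmem t) _
        _ = C * dist x.1 y.1 := by rw [dist_eq_norm]
        _ ≤ C * dist x y :=
            mul_le_mul_of_nonneg_left (by rw [Prod.dist_eq]; exact le_max_left _ _) hC0
        _ ≤ max 1 C * dist x y := mul_le_mul_of_nonneg_right (le_max_right _ _) dist_nonneg
  set u1 : ℝ → ((Fin n → ℝ) × (Fin n → ℝ)) := fun t => (f t, g t) with hu1
  set u2 : ℝ → ((Fin n → ℝ) × (Fin n → ℝ)) := fun t => (f' t, g' t) with hu2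
  have hd1 : ∀ t ∈ Icc a b, HasDerivWithinAt u1 (v t (u1 t)) (Icc a b) t := by
    intro t ht
    have := (hp t ht).1.prodMk (hp t ht).2
    simpa [hv, hu1, hceq t ht] using this
  have hd2 : ∀ t ∈ Icc a b, HasDerivWithinAt u2 (v t (u2 t)) (Icc a b) t := by
    intro t ht
    have := (hq t ht).1.prodMk (hq t ht).2
    simpa [hv, hu2, hceq t ht] using this
  have hcont1 : ContinuousOn u1 (Icc a b) := fun t ht => (hd1 t ht).continuousWithinAt
  have hcont2 : ContinuousOn u2 (Icc a b) := fun t ht => (hd2 t ht).continuousWithinAt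
  have ht₀eq : u1 t₀ = u2 t₀ := by rw [hu1, hu2]; simp [h1, h2]
  have hright : EqOn u1 u2 (Icc t₀ b) := by
    apply ODE_solution_unique_of_mem_Icc_right (s := fun _ => (univ : Set _)) (fun t _ => hlip t)
      (hcont1.mono (Icc_subset_Icc ht₀.1 le_rfl)) ?_ (fun _ _ => mem_univ _)
      (hcont2.mono (Icc_subset_Icc ht₀.1 le_rfl)) ?_ (fun _ _ => mem_univ _) ht₀eq
    · intro t ht
      have htm : t ∈ Icc a b := ⟨le_trans ht₀.1 ht.1, le_of_lt ht.2⟩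
      exact (hd1 t htm).mono_of_mem_nhdsWithin (mem_nhdsWithin.mpr
        ⟨Iio b, isOpen_Iio, ht.2, fun z hz => ⟨le_trans htm.1 hz.2, le_of_lt hz.1⟩⟩)
    · intro t ht
      have htm : t ∈ Icc a b := ⟨le_trans ht₀.1 ht.1, le_of_lt ht.2⟩
      exact (hd2 t htm).mono_of_mem_nhdsWithin (mem_nhdsWithin.mpr
        ⟨Iio b, isOpen_Iio, ht.2, fun z hz => ⟨le_trans htm.1 hz.2, le_of_lt hz.1⟩⟩)
  have hleft : EqOn u1 u2 (Icc a t₀) := by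
    apply ODE_solution_unique_of_mem_Icc_left (s := fun _ => (univ : Set _)) (fun t _ => hlip t)
      (hcont1.mono (Icc_subset_Icc le_rfl ht₀.2)) ?_ (fun _ _ => mem_univ _)
      (hcont2.mono (Icc_subset_Icc le_rfl ht₀.2)) ?_ (fun _ _ => mem_univ _) ht₀eq
    · intro t ht
      have htm : t ∈ Icc a b := ⟨le_of_lt ht.1, le_trans ht.2 ht₀.2⟩
      exact (hd1 t htm).mono_of_mem_nhdsWithin (mem_nhdsWithin.mpr
        ⟨Ioi a, isOpen_Ioi, ht.1, fun z hz => ⟨le_of_lt hz.1, le_trans hz.2 htm.2⟩⟩)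
    · intro t ht
      have htm : t ∈ Icc a b := ⟨le_of_lt ht.1, le_trans ht.2 ht₀.2⟩
      exact (hd2 t htm).mono_of_mem_nhdsWithin (mem_nhdsWithin.mpr
        ⟨Ioi a, isOpen_Ioi, ht.1, fun z hz => ⟨le_of_lt hz.1, le_trans hz.2 htm.2⟩⟩)
  intro t ht
  rcases le_total t t₀ with h | h
  · have := hleft ⟨ht.1, h⟩
    exact ⟨congrArg Prod.fst this, congrArg Prod.snd this⟩
  · have := hright ⟨h, ht.2⟩
    exact ⟨congrArg Prod.fst this, congrArg Prod.snd this⟩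

/-- Derivative of a dot product of two curves. -/
lemma hasDerivWithinAt_dotProduct {u w : ℝ → (Fin n → ℝ)} {u' w' : Fin n → ℝ} {s : Set ℝ} {t : ℝ}
    (hu : HasDerivWithinAt u u' s t) (hw : HasDerivWithinAt w w' s t) :
    HasDerivWithinAt (fun t => u t ⬝ᵥ w t) (u' ⬝ᵥ w t + u t ⬝ᵥ w') s t := by
  have h : ∀ i : Fin n, HasDerivWithinAt (fun t => u t i * w t i)
      (u' i * w t i + u t i * w' i) s t := fun i =>
    (hasDerivWithinAt_pi.mp hu i).mul (hasDerivWithinAt_pi.mp hw i)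
  have := HasDerivWithinAt.fun_sum (fun i (_ : i ∈ Finset.univ) => h i)
  simpa [dotProduct, Finset.sum_add_distrib] using this

/-- Constancy of the symplectic pairing of two solutions (uses symmetry of `R`). -/
lemma symplectic_const (hRsymm : ∀ s ∈ Icc a b, (R s).IsSymm)
    {f g f' g' : ℝ → (Fin n → ℝ)}
    (hp : IsSolPair R a b f g) (hq : IsSolPair R a b f' g') :
    ∀ t ∈ Icc a b, g t ⬝ᵥ f' t - f t ⬝ᵥ g' t = g a ⬝ᵥ f' a - f a ⬝ᵥ g' a := by
  set φ : ℝ → ℝ := fun t => g t ⬝ᵥ f' t - f t ⬝ᵥ g' t with hφ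
  have hderiv : ∀ t ∈ Icc a b, HasDerivWithinAt φ 0 (Icc a b) t := by
    intro t ht
    have h1 := hasDerivWithinAt_dotProduct (hp t ht).2 (hq t ht).1
    have h2 := hasDerivWithinAt_dotProduct (hp t ht).1 (hq t ht).2
    have key : (R t *ᵥ f t) ⬝ᵥ f' t + g t ⬝ᵥ g' t - (g t ⬝ᵥ g' t + f t ⬝ᵥ (R t *ᵥ f' t)) = 0 := by
      have hs : (R t *ᵥ f t) ⬝ᵥ f' t = f t ⬝ᵥ (R t *ᵥ f' t) := by
        rw [Matrix.dotProduct_mulVec, ← Matrix.mulVec_transpose, (hRsymm t ht).eq,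
          dotProduct_comm]
      rw [hs]; ring
    have := h1.sub h2
    rwa [key] at this
  have hdiff : DifferentiableOn ℝ φ (Icc a b) :=
    fun t ht => (hderiv t ht).differentiableWithinAt
  have hzero : ∀ t ∈ Ico a b, derivWithin φ (Icc a b) t = 0 := by
    intro t ht
    have huniq : UniqueDiffWithinAt ℝ (Icc a b) t :=
      (uniqueDiffOn_Icc (lt_of_le_of_lt ht.1 ht.2)) t ⟨ht.1, le_of_lt ht.2⟩
    exact (hderiv t ⟨ht.1, le_of_lt ht.2⟩).derivWithin huniq
  exact fun t ht => constant_of_derivWithin_zero hdiff hzero t ht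

end Auxiliary

set_option maxHeartbeats 2000000

/-- Given a continuous family `R` of symmetric matrices on `[a,b]` and a Lagrangian subspace
`τ ⊆ ℝ²ⁿ`, the set of `t ∈ [a,b]` at which some nonzero smooth solution of `−X'' + RX = 0`
with initial data `(X(a), X'(a)) ∈ τ` vanishes is finite: the curve of Lagrangian subspaces
obtained by transporting `τ` along the Jacobi flow meets the set of Lagrangians
intersecting `σ = {0} × ℝⁿ` nontrivially only finitely many times. -/
theorem jacobi_vanishing_times_finite (n : ℕ) (hn : 1 ≤ n) (a b : ℝ) (hab : a < b)
    (R : ℝ → Matrix (Fin n) (Fin n) ℝ)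
    (hRcont : ContinuousOn R (Icc a b))
    (hRsymm : ∀ s ∈ Icc a b, (R s).IsSymm)
    (τ : Submodule ℝ ((Fin n → ℝ) × (Fin n → ℝ))) (hτ : IsLagrangian n τ) :
    Set.Finite {t ∈ Icc a b | ∃ X : ℝ → Fin n → ℝ,
      ContDiffOn ℝ (⊤ : ℕ∞) X (Icc a b) ∧
      (∀ s ∈ Icc a b,
        -derivWithin (derivWithin X (Icc a b)) (Icc a b) s + R s *ᵥ X s = 0) ∧
      (X a, derivWithin X (Icc a b) a) ∈ τ ∧
      X t = 0 ∧
      ¬∀ s ∈ Icc a b, X s = 0} := by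
  classical
  rw [← Set.not_infinite]
  intro hinf
  have hab' : a ≤ b := hab.le
  have haIcc : a ∈ Icc a b := left_mem_Icc.mpr hab'
  have hUD : UniqueDiffOn ℝ (Icc a b) := uniqueDiffOn_Icc hab
  -- the submodule of "good" initial data
  set Sg : Set ((Fin n → ℝ) × (Fin n → ℝ)) :=
    {v | v ∈ τ ∧ ∃ f g, IsSolPair R a b f g ∧ f a = v.1 ∧ g a = v.2} with hSgdef
  set Vg : Submodule ℝ ((Fin n → ℝ) × (Fin n → ℝ)) :=
    { carrier := Sg
      add_mem' := by
        rintro v w ⟨hvτ, f, g, hfg, hfa, hga⟩ ⟨hwτ, f', g', hfg', hfa', hga'⟩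
        exact ⟨τ.add_mem hvτ hwτ, _, _, isSolPair_add hfg hfg',
          by simp [hfa, hfa'], by simp [hga, hga']⟩
      zero_mem' := ⟨τ.zero_mem, _, _, isSolPair_zero, rfl, rfl⟩
      smul_mem' := by
        rintro cc v ⟨hvτ, f, g, hfg, hfa, hga⟩
        exact ⟨τ.smul_mem cc hvτ, _, _, isSolPair_smul cc hfg,
          by simp [hfa], by simp [hga]⟩ } with hVgdef
  have mem_Vg : ∀ v, v ∈ Vg ↔ v ∈ Sg := fun v => Iff.rfl
  -- extraction of unit data with vanishing solutions from the bad set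
  have key : ∀ t ∈ {t ∈ Icc a b | ∃ X : ℝ → Fin n → ℝ,
      ContDiffOn ℝ (⊤ : ℕ∞) X (Icc a b) ∧
      (∀ s ∈ Icc a b,
        -derivWithin (derivWithin X (Icc a b)) (Icc a b) s + R s *ᵥ X s = 0) ∧
      (X a, derivWithin X (Icc a b) a) ∈ τ ∧
      X t = 0 ∧
      ¬∀ s ∈ Icc a b, X s = 0}, ∃ v : (Fin n → ℝ) × (Fin n → ℝ), v ∈ Sg ∧ ‖v‖ = 1 ∧
      ∃ f g, IsSolPair R a b f g ∧ f a = v.1 ∧ g a = v.2 ∧ f t = 0 := by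
    rintro t ⟨htI, X, hX, hODE, hXτ, hXt, hXne⟩
    set g0 := derivWithin X (Icc a b) with hg0
    have hXd : ∀ s ∈ Icc a b, HasDerivWithinAt X (g0 s) (Icc a b) s := fun s hs =>
      ((hX.differentiableOn (by simp)) s hs).hasDerivWithinAt
    have hg0cd : ContDiffOn ℝ (⊤ : ℕ∞) g0 (Icc a b) := hX.derivWithin hUD (by simp)
    have hgd : ∀ s ∈ Icc a b, HasDerivWithinAt g0 (R s *ᵥ X s) (Icc a b) s := by
      intro s hs
      have h1 := ((hg0cd.differentiableOn (by simp)) s hs).hasDerivWithinAt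
      have h2 : derivWithin g0 (Icc a b) s = R s *ᵥ X s := neg_add_eq_zero.mp (hODE s hs)
      rwa [h2] at h1
    have hsolX : IsSolPair R a b X g0 := fun s hs => ⟨hXd s hs, hgd s hs⟩
    set v0 : (Fin n → ℝ) × (Fin n → ℝ) := (X a, g0 a) with hv0
    have hv0ne : v0 ≠ 0 := by
      intro h0
      apply hXne
      intro s hs
      exact (solPair_unique hab' hRcont hsolX isSolPair_zero haIcc
        (congrArg Prod.fst h0) (congrArg Prod.snd h0) s hs).1
    have hn0 : ‖v0‖ ≠ 0 := norm_ne_zero_iff.mpr hv0ne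
    refine ⟨‖v0‖⁻¹ • v0, ⟨τ.smul_mem _ hXτ, fun s => ‖v0‖⁻¹ • X s, fun s => ‖v0‖⁻¹ • g0 s,
        isSolPair_smul _ hsolX, by simp [hv0], by simp [hv0]⟩, ?_,
      fun s => ‖v0‖⁻¹ • X s, fun s => ‖v0‖⁻¹ • g0 s, isSolPair_smul _ hsolX,
      by simp [hv0], by simp [hv0], by simp [hXt]⟩
    rw [norm_smul, norm_inv, norm_norm, inv_mul_cancel₀ hn0]
  choose! vfun hvS hvnorm Fc Gc hsolc hFca hGca hvan using key
  -- the sequence of vanishing times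
  set emb := hinf.natEmbedding with hembdef
  set t0 : ℕ → ℝ := fun k => (emb k : ℝ) with ht0def
  have ht0S : ∀ k, t0 k ∈ {t ∈ Icc a b | ∃ X : ℝ → Fin n → ℝ,
      ContDiffOn ℝ (⊤ : ℕ∞) X (Icc a b) ∧
      (∀ s ∈ Icc a b,
        -derivWithin (derivWithin X (Icc a b)) (Icc a b) s + R s *ᵥ X s = 0) ∧
      (X a, derivWithin X (Icc a b) a) ∈ τ ∧
      X t = 0 ∧
      ¬∀ s ∈ Icc a b, X s = 0} := fun k => (emb k).2
  have ht0inj : Function.Injective t0 := fun j k h => emb.injective (Subtype.val_injective h)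
  have hSsub : ∀ k, t0 k ∈ Icc a b := fun k => (ht0S k).1
  -- first extraction: convergent subsequence of times
  obtain ⟨tstar, htstar, φ, hφ, hφt⟩ := isCompact_Icc.tendsto_subseq hSsub
  -- second extraction: convergent subsequence of unit data
  have hVgclosed : IsClosed (Vg : Set ((Fin n → ℝ) × (Fin n → ℝ))) :=
    Submodule.closed_of_finiteDimensional Vg
  have hCcomp : IsCompact ((Vg : Set ((Fin n → ℝ) × (Fin n → ℝ))) ∩ Metric.sphere 0 1) :=
    (isCompact_sphere (0 : (Fin n → ℝ) × (Fin n → ℝ)) 1).inter_left hVgclosed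
  have hw1mem : ∀ k, vfun (t0 (φ k)) ∈ (Vg : Set ((Fin n → ℝ) × (Fin n → ℝ))) ∩ Metric.sphere 0 1 := fun k =>
    ⟨(mem_Vg _).mpr (hvS _ (ht0S (φ k))), mem_sphere_zero_iff_norm.mpr (hvnorm _ (ht0S (φ k)))⟩
  obtain ⟨vstar, hvstarC, ψ, hψ, hψt⟩ := hCcomp.tendsto_subseq hw1mem
  set T : ℕ → ℝ := fun k => t0 (φ (ψ k)) with hTdef
  have hTS : ∀ k, T k ∈ {t ∈ Icc a b | ∃ X : ℝ → Fin n → ℝ,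
      ContDiffOn ℝ (⊤ : ℕ∞) X (Icc a b) ∧
      (∀ s ∈ Icc a b,
        -derivWithin (derivWithin X (Icc a b)) (Icc a b) s + R s *ᵥ X s = 0) ∧
      (X a, derivWithin X (Icc a b) a) ∈ τ ∧
      X t = 0 ∧
      ¬∀ s ∈ Icc a b, X s = 0} := fun k => ht0S (φ (ψ k))
  have hTmem : ∀ k, T k ∈ Icc a b := fun k => (hTS k).1
  have hTtend : Tendsto T atTop (𝓝 tstar) := hφt.comp hψ.tendsto_atTop
  have hTinj : Function.Injective T :=
    ht0inj.comp (hφ.injective.comp hψ.injective)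
  set u : ℕ → (Fin n → ℝ) × (Fin n → ℝ) := fun k => vfun (T k) with hudef
  have hut : Tendsto u atTop (𝓝 vstar) := hψt
  have huVg : ∀ k, u k ∈ Vg := fun k => (mem_Vg _).mpr (hvS _ (hTS k))
  have hvstarVg : vstar ∈ Vg := hvstarC.1
  have hvstarn : ‖vstar‖ = 1 := mem_sphere_zero_iff_norm.mp hvstarC.2
  obtain ⟨hvsτ, fs, gs, hsols, hfsa, hgsa⟩ := (mem_Vg vstar).mp hvstarVg
  -- basis of the good-data space and basis solutions
  set m := Module.finrank ℝ ↥Vg with hmdef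
  set bas : Module.Basis (Fin m) ℝ ↥Vg := Module.finBasis ℝ ↥Vg with hbasdef
  have hbmem : ∀ i : Fin m, ((bas i : (Fin n → ℝ) × (Fin n → ℝ))) ∈ Sg :=
    fun i => (mem_Vg _).mp (bas i).2
  choose Fb Gb hsolb hFba hGba using fun i => (hbmem i).2
  have hbτ : ∀ i, ((bas i : (Fin n → ℝ) × (Fin n → ℝ))) ∈ τ := fun i => (hbmem i).1
  -- every solution with data in Vg is the corresponding combination of basis solutions
  have hcomb : ∀ (w : ↥Vg) (f g : ℝ → Fin n → ℝ), IsSolPair R a b f g →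
      f a = (w : (Fin n → ℝ) × (Fin n → ℝ)).1 → g a = (w : (Fin n → ℝ) × (Fin n → ℝ)).2 →
      ∀ t ∈ Icc a b, f t = ∑ i, bas.repr w i • Fb i t ∧ g t = ∑ i, bas.repr w i • Gb i t := by
    intro w f g hsol hfa hga
    have hsum := isSolPair_sum (fun i => bas.repr w i) hsolb
    have hw : (w : (Fin n → ℝ) × (Fin n → ℝ)) =
        ∑ i, bas.repr w i • ((bas i : (Fin n → ℝ) × (Fin n → ℝ))) := by
      conv_lhs => rw [← bas.sum_repr w]
      rw [Submodule.coe_sum]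
      simp
    have h1 : f a = ∑ i, bas.repr w i • Fb i a := by
      rw [hfa, hw, Prod.fst_sum]
      exact Finset.sum_congr rfl fun i _ => by rw [Prod.smul_fst, (hFba i)]
    have h2 : g a = ∑ i, bas.repr w i • Gb i a := by
      rw [hga, hw, Prod.snd_sum]
      exact Finset.sum_congr rfl fun i _ => by rw [Prod.smul_snd, (hGba i)]
    exact solPair_unique hab' hRcont hsol hsum haIcc h1 h2
  -- coordinates of the data sequence
  set crd : ℕ → Fin m → ℝ := fun k i => bas.repr ⟨u k, huVg k⟩ i with hcrddef
  set cst : Fin m → ℝ := fun i => bas.repr ⟨vstar, hvstarVg⟩ i with hcstdef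
  have hcrd : ∀ i, Tendsto (fun k => crd k i) atTop (𝓝 (cst i)) := by
    have hsub : Tendsto (fun k => (⟨u k, huVg k⟩ : ↥Vg)) atTop (𝓝 ⟨vstar, hvstarVg⟩) := by
      rw [Topology.IsEmbedding.subtypeVal.tendsto_nhds_iff]
      exact hut
    have hcontrepr : Continuous (fun w : ↥Vg => (bas.equivFun w : Fin m → ℝ)) :=
      LinearMap.continuous_of_finiteDimensional (bas.equivFun : ↥Vg ≃ₗ[ℝ] (Fin m → ℝ)).toLinearMap
    have := (hcontrepr.tendsto _).comp hsub
    intro i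
    have hre : ∀ (w : ↥Vg) (i : Fin m), bas.equivFun w i = bas.repr w i := fun w i => by
      rw [bas.equivFun_apply]
    have hi := tendsto_pi_nhds.mp this i
    simpa [hre] using hi
  -- the vanishing identity at each time T k
  have hzero : ∀ k, ∑ i, crd k i • Fb i (T k) = 0 := by
    intro k
    have h := hcomb ⟨u k, huVg k⟩ (Fc (T k)) (Gc (T k)) (hsolc _ (hTS k))
      (hFca _ (hTS k)) (hGca _ (hTS k)) (T k) (hTmem k)
    rw [← h.1]
    exact hvan _ (hTS k)
  -- the limit solution's components
  have hstar_comp := hcomb ⟨vstar, hvstarVg⟩ fs gs hsols hfsa hgsa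
  -- T tends to tstar within the interval
  have hTt : Tendsto T atTop (𝓝[Icc a b] tstar) :=
    tendsto_nhdsWithin_iff.mpr ⟨hTtend, Eventually.of_forall hTmem⟩
  have hFlim : ∀ i, Tendsto (fun k => Fb i (T k)) atTop (𝓝 (Fb i tstar)) := fun i =>
    ((hsolb i tstar htstar).1.continuousWithinAt.tendsto).comp hTt
  -- Step 1: the limit solution vanishes at tstar
  have hfs0 : fs tstar = 0 := by
    have hl : Tendsto (fun k => ∑ i, crd k i • Fb i (T k)) atTop
        (𝓝 (∑ i, cst i • Fb i tstar)) :=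
      tendsto_finset_sum _ fun i _ => (hcrd i).smul (hFlim i)
    have heq : (fun k => ∑ i, crd k i • Fb i (T k)) = fun _ => (0 : Fin n → ℝ) :=
      funext hzero
    rw [heq] at hl
    have h0 : ∑ i, cst i • Fb i tstar = 0 := tendsto_nhds_unique hl tendsto_const_nhds
    rw [(hstar_comp tstar htstar).1, h0]
  -- Euclidean space setup
  set eL : (Fin n → ℝ) ≃L[ℝ] EuclideanSpace ℝ (Fin n) :=
    (EuclideanSpace.equiv (Fin n) ℝ).symm with heLdef
  have heLinner : ∀ x y : Fin n → ℝ, (inner ℝ (eL x) (eL y) : ℝ) = x ⬝ᵥ y := by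
    intro x y
    rw [PiLp.inner_apply]
    simp [dotProduct, heLdef, EuclideanSpace.equiv, mul_comm]
  set Ksub : Submodule ℝ (EuclideanSpace ℝ (Fin n)) :=
    Submodule.span ℝ (Set.range fun i => eL (Fb i tstar)) with hKsubdef
  have hFmem : ∀ i, eL (Fb i tstar) ∈ Ksub := fun i =>
    Submodule.subset_span (mem_range_self i)
  -- Step 2: the momentum of the limit solution at tstar is orthogonal to Ksub
  have horthG : eL (gs tstar) ∈ Ksubᗮ := by
    rw [Submodule.mem_orthogonal]
    intro x hx
    induction hx using Submodule.span_induction with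
    | mem x hxr =>
      obtain ⟨i, rfl⟩ := hxr
      rw [heLinner]
      have hsym := symplectic_const hRsymm (hsolb i) hsols tstar htstar
      rw [hFba i, hGba i, hfsa, hgsa] at hsym
      have hτ0 : ((bas i : (Fin n → ℝ) × (Fin n → ℝ))).2 ⬝ᵥ vstar.1 -
          ((bas i : (Fin n → ℝ) × (Fin n → ℝ))).1 ⬝ᵥ vstar.2 = 0 :=
        hτ.2 _ (hbτ i) _ hvsτ
      rw [hτ0, hfs0] at hsym
      have : Gb i tstar ⬝ᵥ (0 : Fin n → ℝ) - Fb i tstar ⬝ᵥ gs tstar = 0 := hsym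
      simpa [dotProduct_zero] using this.symm
    | zero => simp
    | add x y _ _ h1 h2 => rw [inner_add_left, h1, h2, add_zero]
    | smul c x _ h1 => rw [inner_smul_left, h1, mul_zero]
  -- eventually T k ≠ tstar
  have hTne : ∀ᶠ k in atTop, T k ≠ tstar := by
    by_cases hex : ∃ k0, T k0 = tstar
    · obtain ⟨k0, hk0⟩ := hex
      filter_upwards [eventually_gt_atTop k0] with k hk hcontra
      exact absurd (hTinj (hcontra.trans hk0.symm)) (ne_of_gt hk)
    · push_neg at hex
      exact Eventually.of_forall hex
  have hTt' : Tendsto T atTop (𝓝[Icc a b \ {tstar}] tstar) :=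
    tendsto_nhdsWithin_iff.mpr ⟨hTtend,
      by filter_upwards [hTne] with k hk using ⟨hTmem k, hk⟩⟩
  -- difference quotients converge to the momenta
  have hslope : ∀ i, Tendsto (fun k => (T k - tstar)⁻¹ • (Fb i (T k) - Fb i tstar)) atTop
      (𝓝 (Gb i tstar)) := by
    intro i
    have h := hasDerivWithinAt_iff_tendsto_slope.mp (hsolb i tstar htstar).1
    have h2 : Tendsto (fun k => slope (Fb i) tstar (T k)) atTop (𝓝 (Gb i tstar)) :=
      h.comp hTt'
    have heq : (fun k => slope (Fb i) tstar (T k)) =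
        fun k => (T k - tstar)⁻¹ • (Fb i (T k) - Fb i tstar) := by
      funext k
      rw [slope_def_module]
    rwa [heq] at h2
  -- the projection onto the orthogonal complement of Ksub
  set A : (Fin n → ℝ) →L[ℝ] ↥Ksubᗮ :=
    (Ksubᗮ.orthogonalProjectionOnto).comp eL.toContinuousLinearMap
    with hAdef
  have hAF : ∀ i, A (Fb i tstar) = 0 := by
    intro i
    rw [hAdef, ContinuousLinearMap.comp_apply]
    exact Submodule.orthogonalProjectionOnto_apply_of_mem_orthogonal
      (Ksub.le_orthogonal_orthogonal (hFmem i))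
  -- the projected rescaled sums vanish
  have hAq : ∀ k, T k ≠ tstar →
      ∑ i, crd k i • ((T k - tstar)⁻¹ • A (Fb i (T k) - Fb i tstar)) = 0 := by
    intro k hk
    have e1 : ∑ i, crd k i • A (Fb i (T k)) = 0 := by
      have : ∑ i, crd k i • A (Fb i (T k)) = A (∑ i, crd k i • Fb i (T k)) := by
        rw [map_sum]
        exact Finset.sum_congr rfl fun i _ => (A.map_smul _ _).symm
      rw [this, hzero k, map_zero]
    calc ∑ i, crd k i • ((T k - tstar)⁻¹ • A (Fb i (T k) - Fb i tstar))
        = ∑ i, (T k - tstar)⁻¹ • (crd k i • A (Fb i (T k))) := by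
          apply Finset.sum_congr rfl
          intro i _
          rw [map_sub, hAF i, sub_zero, smul_comm]
      _ = (T k - tstar)⁻¹ • ∑ i, crd k i • A (Fb i (T k)) := by rw [Finset.smul_sum]
      _ = 0 := by rw [e1, smul_zero]
  -- pass to the limit
  have hAlim : Tendsto (fun k => ∑ i, crd k i • ((T k - tstar)⁻¹ • A (Fb i (T k) - Fb i tstar)))
      atTop (𝓝 (∑ i, cst i • A (Gb i tstar))) := by
    apply tendsto_finset_sum
    intro i _
    have h1 : Tendsto (fun k => (T k - tstar)⁻¹ • A (Fb i (T k) - Fb i tstar)) atTop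
        (𝓝 (A (Gb i tstar))) := by
      have h0 : Tendsto (fun k => A ((T k - tstar)⁻¹ • (Fb i (T k) - Fb i tstar))) atTop
          (𝓝 (A (Gb i tstar))) := (A.continuous.tendsto _).comp (hslope i)
      have heq : (fun k => A ((T k - tstar)⁻¹ • (Fb i (T k) - Fb i tstar))) =
          fun k => (T k - tstar)⁻¹ • A (Fb i (T k) - Fb i tstar) := by
        funext k
        rw [A.map_smul]
      rwa [heq] at h0
    exact (hcrd i).smul h1
  have hAG0 : ∑ i, cst i • A (Gb i tstar) = 0 := by
    have hz : (fun k => ∑ i, crd k i • ((T k - tstar)⁻¹ • A (Fb i (T k) - Fb i tstar)))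
        =ᶠ[atTop] (fun _ => (0 : ↥Ksubᗮ)) := by
      filter_upwards [hTne] with k hk
      exact hAq k hk
    exact tendsto_nhds_unique (hAlim.congr' hz) tendsto_const_nhds
  -- hence the projection of gs tstar vanishes
  have hAg : A (gs tstar) = 0 := by
    have : A (gs tstar) = ∑ i, cst i • A (Gb i tstar) := by
      rw [(hstar_comp tstar htstar).2, map_sum]
      exact Finset.sum_congr rfl fun i _ => A.map_smul _ _
    rw [this, hAG0]
  -- but gs tstar is orthogonal to Ksub, so it must vanish entirely
  have hgs0 : gs tstar = 0 := by
    have h1 : ((Ksubᗮ.orthogonalProjectionOnto (eL (gs tstar))) : EuclideanSpace ℝ (Fin n)) =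
        eL (gs tstar) := Ksubᗮ.starProjection_eq_self_iff.mpr horthG
    have h2 : Ksubᗮ.orthogonalProjectionOnto (eL (gs tstar)) = A (gs tstar) := rfl
    rw [h2, hAg] at h1
    have h3 : eL (gs tstar) = 0 := by simpa using h1.symm
    have := eL.injective (by simpa using h3)
    simpa using this
  -- the limit solution is identically zero, contradicting ‖vstar‖ = 1
  have hzero_sol := solPair_unique hab' hRcont hsols isSolPair_zero htstar hfs0 hgs0
  have hv1 : vstar.1 = 0 := by rw [← hfsa]; exact (hzero_sol a haIcc).1
  have hv2 : vstar.2 = 0 := by rw [← hgsa]; exact (hzero_sol a haIcc).2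
  have : vstar = 0 := Prod.ext hv1 hv2
  rw [this, norm_zero] at hvstarn
  exact zero_ne_one hvstarn
end
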